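/- Let V, w, T, χ be as in the decomposition identity, and fix λ ∈ ℝ and c ∈ {0,…,|V|}. Then G_{>λ} (the threshold graph of the complete graph) admits a proper 2-coloring with color class 0 of size c if and only if diam(χ) ≤ λ and the forest T_{>λ} (tree edges of weight > λ) admits a proper 2-coloring with color class 0 of size c. -/

import Mathlib

open SimpleGraph

/-- Total weight of a graph's edges. -/
noncomputable def edgeWeightSum {V : Type*} [Fintype V] (w : Sym2 V → ℝ)
    (G : SimpleGraph V) : ℝ :=
  ∑ e ∈ G.edgeSet.toFinite.toFinset, w e

/-- `pdiam w φ` : the partition diameter of the 2-coloring `φ`, i.e. the maximum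
weight over `φ`-monochromatic pairs of distinct vertices (`⊥` if none). -/
noncomputable def pdiam {V : Type*} [Fintype V] [DecidableEq V]
    (w : Sym2 V → ℝ) (φ : V → Fin 2) : EReal :=
  Finset.sup (Finset.univ.filter fun uv : V × V => uv.1 ≠ uv.2 ∧ φ uv.1 = φ uv.2)
    fun uv => (w s(uv.1, uv.2) : EReal)

/-- The threshold graph `G_{>λ}` : edges are pairs of weight greater than `λ`. -/
def thresholdGraph {V : Type*} (w : Sym2 V → ℝ) (lam : ℝ) : SimpleGraph V where
  Adj u v := u ≠ v ∧ lam < w s(u, v)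
  symm := by
    constructor
    intro u v h
    refine ⟨h.1.symm, ?_⟩
    rw [Sym2.eq_swap]
    exact h.2
  loopless := by constructor; intro v h; exact h.1 rfl

/-- Size of color class `0` of a 2-coloring. -/
def card0 {V : Type*} [Fintype V] [DecidableEq V] (φ : V → Fin 2) : ℕ :=
  (Finset.univ.filter fun v => φ v = 0).card

/-! The cycle property of a maximum spanning tree: if `e` lies on the tree path from `u` to `v`,
exchanging `e` for the pair `uv` gives another spanning tree, so `w(uv) ≤ w(e)`. Hence when
`w(uv) > λ` the whole tree path from `u` to `v` lies in `T_{>λ}`, so a proper coloring of `T_{>λ}`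
and the proper coloring `χ` of `T` both give `u` and `v` the same color exactly when the path has
even length. Thus on every edge of `G_{>λ}` such a coloring is proper iff `χ` is, which is
`diam(χ) ≤ λ`. -/

section

variable {V : Type*}

def IsMaxSpanningTree [Fintype V] (w : Sym2 V → ℝ) (T : SimpleGraph V) : Prop :=
  T.IsTree ∧ ∀ T' : SimpleGraph V, T'.IsTree → edgeWeightSum w T' ≤ edgeWeightSum w T

theorem pdiam_le_coe_iff [Fintype V] [DecidableEq V] {w : Sym2 V → ℝ} {φ : V → Fin 2} {r : ℝ} :
    pdiam w φ ≤ (r : EReal) ↔ ∀ u v, u ≠ v → φ u = φ v → w s(u, v) ≤ r := by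
  simp [pdiam]

end

namespace SimpleGraph

variable {V : Type*} {G T : SimpleGraph V}

theorem Walk.apply_eq_apply_iff_even_length {ψ : V → Fin 2} {u v : V} (p : G.Walk u v)
    (hψ : ∀ a b, s(a, b) ∈ p.edges → ψ a ≠ ψ b) : ψ u = ψ v ↔ Even p.length := by
  induction p with
  | nil => simp
  | cons hadj q ih =>
    have hflip : ∀ a b c : Fin 2, a ≠ b → (a = c ↔ ¬b = c) := by decide
    rw [length_cons, Nat.even_add_one, ← ih fun a b hab => hψ a b (by simp [hab])]
    exact hflip _ _ _ (hψ _ _ (by simp))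

theorem edgeSet_sup_edge_deleteEdges {u v : V} (huv : u ≠ v) {e : Sym2 V} (he : e ≠ s(u, v)) :
    ((T ⊔ edge u v).deleteEdges {e}).edgeSet = insert s(u, v) (T.edgeSet \ {e}) := by
  ext x
  have hdiag : ¬ s(u, v).IsDiag := by simpa using huv
  simp only [edgeSet_deleteEdges, edgeSet_sup, edgeSet_edge, Set.mem_sdiff, Set.mem_union,
    Set.mem_singleton_iff, Sym2.mem_diagSet, Set.mem_insert_iff]
  grind

theorem IsTree.isTree_sup_edge_deleteEdges [Finite V] (hT : T.IsTree) {u v : V} (huv : u ≠ v)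
    (hadj : ¬ T.Adj u v) {p : T.Walk u v} (hp : p.IsPath) {e : Sym2 V} (he : e ∈ p.edges) :
    ((T ⊔ edge u v).deleteEdges {e}).IsTree := by
  set H := T ⊔ edge u v
  have hvu : H.Adj v u := Or.inr (by simp [edge_adj, huv.symm])
  have hcycle : (Walk.cons hvu (p.mapLe le_sup_left)).IsCycle := by
    rw [Walk.cons_isCycle_iff, Walk.edges_mapLe_eq_edges]
    exact ⟨hp.mapLe le_sup_left, fun h => hadj (T.adj_symm (p.adj_of_mem_edges h))⟩
  have hbridge : ¬ H.IsBridge e := fun h => h.notMem_edges_of_isCycle hcycle (by simp [he])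
  have hconn : (H.deleteEdges {e}).Connected := by
    induction e using Sym2.ind with
    | _ a b => exact (hT.connected.mono le_sup_left).connected_delete_edge_of_not_isBridge hbridge
  have heT : e ∈ T.edgeSet := p.edges_subset_edgeSet he
  have hne : e ≠ s(u, v) := by
    rintro rfl
    exact hadj heT
  rw [isTree_iff_connected_and_card, Nat.card_coe_set_eq, edgeSet_sup_edge_deleteEdges huv hne,
    Set.ncard_insert_of_notMem (fun h => hadj h.1), Set.ncard_sdiff_singleton_add_one heT,
    ← Nat.card_coe_set_eq]
  exact ⟨hconn, (isTree_iff_connected_and_card.1 hT).2⟩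

end SimpleGraph

section

variable {V : Type*} [Fintype V] {w : Sym2 V → ℝ} {T : SimpleGraph V}

theorem edgeWeightSum_sup_edge_deleteEdges {u v : V} (huv : u ≠ v) (hadj : ¬ T.Adj u v)
    {e : Sym2 V} (he : e ∈ T.edgeSet) :
    edgeWeightSum w ((T ⊔ edge u v).deleteEdges {e}) + w e = edgeWeightSum w T + w s(u, v) := by
  classical
  have hne : e ≠ s(u, v) := by
    rintro rfl
    exact hadj he
  have hfinset : ((T ⊔ edge u v).deleteEdges {e}).edgeSet.toFinite.toFinset =
      insert s(u, v) (T.edgeSet.toFinite.toFinset.erase e) := by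
    ext x
    simp only [Set.Finite.mem_toFinset, edgeSet_sup_edge_deleteEdges huv hne, Finset.mem_insert,
      Finset.mem_erase, Set.mem_insert_iff, Set.mem_sdiff, Set.mem_singleton_iff]
    tauto
  rw [edgeWeightSum, edgeWeightSum, hfinset, Finset.sum_insert (by simp [hadj]),
    ← Finset.add_sum_erase T.edgeSet.toFinite.toFinset w (by simpa using he)]
  ring

theorem IsMaxSpanningTree.weight_le_of_mem_edges (hT : IsMaxSpanningTree w T) {u v : V}
    {p : T.Walk u v} (hp : p.IsPath) {e : Sym2 V} (he : e ∈ p.edges) : w s(u, v) ≤ w e := by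
  by_cases hadj : T.Adj u v
  · have hsingle := (hT.1.isAcyclic.subsingleton_path u v).elim ⟨p, hp⟩ (Path.singleton hadj)
    obtain rfl : e = s(u, v) := by simpa [congrArg (·.1.edges) hsingle] using he
    rfl
  have huv : u ≠ v := by
    rintro rfl
    simp [Walk.edges_eq_nil.2 (Walk.isPath_iff_nil.1 hp)] at he
  have heT := p.edges_subset_edgeSet he
  have := hT.2 _ (hT.1.isTree_sup_edge_deleteEdges huv hadj hp he)
  linarith [edgeWeightSum_sup_edge_deleteEdges (w := w) huv hadj heT]

theorem IsMaxSpanningTree.apply_eq_apply_iff_of_lt_weight (hT : IsMaxSpanningTree w T)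
    {χ φ : V → Fin 2} (hχ : ∀ a b, T.Adj a b → χ a ≠ χ b) {lam : ℝ}
    (hφ : ∀ a b, T.Adj a b → lam < w s(a, b) → φ a ≠ φ b) {u v : V} (huv : lam < w s(u, v)) :
    φ u = φ v ↔ χ u = χ v := by
  obtain ⟨p, hp⟩ := hT.1.connected.exists_isPath u v
  have hheavy : ∀ e ∈ p.edges, lam < w e := fun e he =>
    huv.trans_le (hT.weight_le_of_mem_edges hp he)
  rw [p.apply_eq_apply_iff_even_length fun a b hab => hχ a b (p.adj_of_mem_edges hab),
    p.apply_eq_apply_iff_even_length fun a b hab =>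
      hφ a b (p.adj_of_mem_edges hab) (hheavy _ hab)]

end

theorem stmt_8_general {V : Type*} [Fintype V] [DecidableEq V] (w : Sym2 V → ℝ)
    (T : SimpleGraph V) (hT : T.IsTree)
    (hmax : ∀ T' : SimpleGraph V, T'.IsTree → edgeWeightSum w T' ≤ edgeWeightSum w T)
    (χ : V → Fin 2) (hχ : ∀ a b, T.Adj a b → χ a ≠ χ b)
    (lam : ℝ) (c : ℕ) :
    (∃ φ : V → Fin 2,
        (∀ u v, (thresholdGraph w lam).Adj u v → φ u ≠ φ v) ∧ card0 φ = c) ↔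
      (pdiam w χ ≤ (lam : EReal) ∧
        ∃ φ : V → Fin 2,
          (∀ u v, T.Adj u v → lam < w s(u, v) → φ u ≠ φ v) ∧ card0 φ = c) := by
  have hTmax : IsMaxSpanningTree w T := ⟨hT, hmax⟩
  rw [pdiam_le_coe_iff]
  constructor
  · rintro ⟨φ, hφ, hcard⟩
    have hφT : ∀ u v, T.Adj u v → lam < w s(u, v) → φ u ≠ φ v := fun u v hadj hw =>
      hφ u v ⟨hadj.ne, hw⟩
    refine ⟨fun u v huv hχuv => not_lt.1 fun hw => ?_, φ, hφT, hcard⟩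
    exact hφ u v ⟨huv, hw⟩ ((hTmax.apply_eq_apply_iff_of_lt_weight hχ hφT hw).2 hχuv)
  · rintro ⟨hdiam, φ, hφ, hcard⟩
    refine ⟨φ, fun u v ⟨huv, hw⟩ => ?_, hcard⟩
    rw [Ne, hTmax.apply_eq_apply_iff_of_lt_weight hχ hφ hw]
    exact fun hχuv => (hdiam u v huv hχuv).not_gt hw

/-- `G_{>λ}` admits a proper 2-coloring with color class 0 of size `c` iff
`diam(χ) ≤ λ` and the forest `T_{>λ}` admits such a coloring. -/
theorem stmt_8 {V : Type*} [Fintype V] [DecidableEq V] (w : Sym2 V → ℝ)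
    (T : SimpleGraph V) [DecidableRel T.Adj] (hT : T.IsTree)
    (hmax : ∀ T' : SimpleGraph V, T'.IsTree → edgeWeightSum w T' ≤ edgeWeightSum w T)
    (χ : V → Fin 2) (hχ : ∀ a b, T.Adj a b → χ a ≠ χ b)
    (lam : ℝ) (c : ℕ) (hc : c ≤ Fintype.card V) :
    (∃ φ : V → Fin 2,
        (∀ u v, (thresholdGraph w lam).Adj u v → φ u ≠ φ v) ∧ card0 φ = c) ↔
      (pdiam w χ ≤ (lam : EReal) ∧
        ∃ φ : V → Fin 2,
          (∀ u v, T.Adj u v → lam < w s(u, v) → φ u ≠ φ v) ∧ card0 φ = c) :=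
  stmt_8_general w T hT hmax χ hχ lam c
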